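/- Let λ, μ ∈ ℂ \ {0} with λ/μ ∉ ℝ, and define f(x,y) = |x|²|y|²/(1+|x|²+|y|²)³ on ℂ². For every n ≥ 28, the level set {(x,y) ∈ ℂ² : f(x,y) = 1/n} contains no point where λ x ∂f/∂x + μ y ∂f/∂y vanishes (with ∂/∂x, ∂/∂y the Wirtinger derivatives). In other words, the holomorphic vector field X = λx ∂/∂x + μy ∂/∂y is transversal to each such level set. -/

import Mathlib

/-!
Since `f` depends only on `u = |x|²` and `v = |y|²`, its Wirtinger derivatives are
`∂f/∂x = f_u · x̄` and `∂f/∂y = f_v · ȳ`, so `λx ∂f/∂x + μy ∂f/∂y = λ u f_u + μ v f_v` with real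
coefficients `u f_u` and `v f_v`. As `λ/μ ∉ ℝ`, both coefficients vanish; on the level set
`u, v > 0`, so `1 + v = 2u` and `1 + u = 2v`, i.e. `u = v = 1`, where `f = 1/27 ≠ 1/n`.
-/
open Complex

/-- `f(x,y) = |x|²|y|²/(1+|x|²+|y|²)³` on `ℂ²`. -/
noncomputable def fLevel : ℂ × ℂ → ℝ := fun p =>
  ‖p.1‖ ^ 2 * ‖p.2‖ ^ 2
    / (1 + ‖p.1‖ ^ 2 + ‖p.2‖ ^ 2) ^ 3

/-- Wirtinger derivative of a real-valued function on `ℂ²` with respect to the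
first complex variable: `∂F/∂x = ½(∂F/∂(Re x) − i ∂F/∂(Im x))`. -/
noncomputable def wirtingerX (F : ℂ × ℂ → ℝ) (p : ℂ × ℂ) : ℂ :=
  (1 / 2 : ℂ) * ((fderiv ℝ (fun x : ℂ => F (x, p.2)) p.1 1 : ℝ)
    - Complex.I * (fderiv ℝ (fun x : ℂ => F (x, p.2)) p.1 Complex.I : ℝ))

/-- Wirtinger derivative with respect to the second complex variable. -/
noncomputable def wirtingerY (F : ℂ × ℂ → ℝ) (p : ℂ × ℂ) : ℂ :=
  (1 / 2 : ℂ) * ((fderiv ℝ (fun y : ℂ => F (p.1, y)) p.2 1 : ℝ)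
    - Complex.I * (fderiv ℝ (fun y : ℂ => F (p.1, y)) p.2 Complex.I : ℝ))

open ComplexConjugate

-- `wirtingerX F p` and `wirtingerY F p` are definitionally `wirtinger` of the slices of `F` through `p`.
noncomputable def wirtinger (F : ℂ → ℝ) (z : ℂ) : ℂ :=
  (1 / 2 : ℂ) * ((fderiv ℝ F z 1 : ℝ) - I * (fderiv ℝ F z I : ℝ))

lemma wirtinger_eq_of_forall_eq_comp_norm_sq {F : ℂ → ℝ} {φ : ℝ → ℝ} {φ' : ℝ} {z : ℂ}
    (hF : ∀ w, F w = φ (‖w‖ ^ 2)) (hφ : HasDerivAt φ φ' (‖z‖ ^ 2)) :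
    wirtinger F z = φ' * conj z := by
  have hD : HasFDerivAt F (φ' • 2 • innerSL ℝ z) z :=
    (hφ.comp_hasFDerivAt z (hasStrictFDerivAt_norm_sq z).hasFDerivAt).congr_of_eventuallyEq
      (Filter.Eventually.of_forall hF)
  have h1 : fderiv ℝ F z 1 = φ' * (2 * z.re) := by
    simp [hD.fderiv, Complex.inner]
  have hI : fderiv ℝ F z I = φ' * (2 * z.im) := by
    simp [hD.fderiv, Complex.inner]
  rw [wirtinger, h1, hI]
  conv_rhs => rw [← re_add_im z]
  simp only [map_add, map_mul, conj_ofReal, conj_I]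
  push_cast
  ring

lemma hasDerivAt_mul_div_one_add_add_pow_three {c t : ℝ} (h : 1 + c + t ≠ 0) :
    HasDerivAt (fun s => c * s / (1 + c + s) ^ 3)
      (c * (1 + c - 2 * t) / (1 + c + t) ^ 4) t := by
  have hnum : HasDerivAt (fun s => c * s) c t := by
    simpa using (hasDerivAt_id t).const_mul c
  have hden : HasDerivAt (fun s => (1 + c + s) ^ 3) (3 * (1 + c + t) ^ 2) t := by
    simpa using ((hasDerivAt_id t).const_add (1 + c)).fun_pow 3
  refine (hnum.div hden (pow_ne_zero 3 h)).congr_deriv ?_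
  field_simp
  ring

lemma wirtingerX_fLevel (x y : ℂ) :
    wirtingerX fLevel (x, y) =
      ((‖y‖ ^ 2 * (1 + ‖y‖ ^ 2 - 2 * ‖x‖ ^ 2) / (1 + ‖y‖ ^ 2 + ‖x‖ ^ 2) ^ 4 : ℝ) : ℂ) * conj x :=
  wirtinger_eq_of_forall_eq_comp_norm_sq (fun _ => by simp only [fLevel]; ring)
    (hasDerivAt_mul_div_one_add_add_pow_three (by positivity))

lemma wirtingerY_fLevel (x y : ℂ) :
    wirtingerY fLevel (x, y) =
      ((‖x‖ ^ 2 * (1 + ‖x‖ ^ 2 - 2 * ‖y‖ ^ 2) / (1 + ‖x‖ ^ 2 + ‖y‖ ^ 2) ^ 4 : ℝ) : ℂ) * conj y :=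
  wirtinger_eq_of_forall_eq_comp_norm_sq (fun _ => rfl)
    (hasDerivAt_mul_div_one_add_add_pow_three (by positivity))

lemma eq_zero_of_mul_add_mul_eq_zero {lam mu : ℂ} (h : lam / mu ∉ Set.range ((↑) : ℝ → ℂ))
    {a b : ℝ} (hab : lam * a + mu * b = 0) : a = 0 ∧ b = 0 := by
  have hmu : mu ≠ 0 := by
    rintro rfl
    exact h ⟨0, by simp⟩
  by_cases ha : a = 0
  · subst ha
    simpa [hmu] using hab
  · refine absurd ⟨-b / a, ?_⟩ h
    have ha' : (a : ℂ) ≠ 0 := by exact_mod_cast ha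
    rw [eq_div_iff hmu]
    push_cast
    field_simp
    linear_combination -hab

lemma mul_wirtingerX_add_mul_wirtingerY_fLevel (lam mu x y : ℂ) :
    lam * x * wirtingerX fLevel (x, y) + mu * y * wirtingerY fLevel (x, y) =
      lam * ((‖x‖ ^ 2 * ‖y‖ ^ 2 * (1 + ‖y‖ ^ 2 - 2 * ‖x‖ ^ 2) / (1 + ‖x‖ ^ 2 + ‖y‖ ^ 2) ^ 4 : ℝ) : ℂ)
      + mu * ((‖x‖ ^ 2 * ‖y‖ ^ 2 * (1 + ‖x‖ ^ 2 - 2 * ‖y‖ ^ 2) / (1 + ‖x‖ ^ 2 + ‖y‖ ^ 2) ^ 4 : ℝ) : ℂ) := by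
  rw [wirtingerX_fLevel, wirtingerY_fLevel]
  push_cast
  linear_combination
    (lam * ‖y‖ ^ 2 * (1 + ‖y‖ ^ 2 - 2 * ‖x‖ ^ 2) / (1 + ‖y‖ ^ 2 + ‖x‖ ^ 2) ^ 4 : ℂ) * mul_conj' x
    + (mu * ‖x‖ ^ 2 * (1 + ‖x‖ ^ 2 - 2 * ‖y‖ ^ 2) / (1 + ‖x‖ ^ 2 + ‖y‖ ^ 2) ^ 4 : ℂ) * mul_conj' y

lemma eq_one_and_eq_one_of_mul_div_eq_zero {u v : ℝ} (hu : 0 < u) (hv : 0 < v)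
    (hu' : u * v * (1 + v - 2 * u) / (1 + u + v) ^ 4 = 0)
    (hv' : u * v * (1 + u - 2 * v) / (1 + u + v) ^ 4 = 0) : u = 1 ∧ v = 1 := by
  have hs : (1 + u + v) ^ 4 ≠ 0 := by positivity
  simp only [div_eq_zero_iff, mul_eq_zero, hu.ne', hv.ne', hs, false_or, or_false] at hu' hv'
  constructor <;> linarith

theorem stmt6_general (lam mu : ℂ)
    (halpha : lam / mu ∉ Set.range ((↑) : ℝ → ℂ))
    (n : ℕ) (hn : 28 ≤ n) (p : ℂ × ℂ) (hp : fLevel p = 1 / (n : ℝ)) :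
    lam * p.1 * wirtingerX fLevel p + mu * p.2 * wirtingerY fLevel p ≠ 0 := by
  obtain ⟨x, y⟩ := p
  have hf : fLevel (x, y) ≠ 0 := by
    rw [hp]
    have : (n : ℝ) ≠ 0 := by exact_mod_cast (by omega : n ≠ 0)
    positivity
  have hx : x ≠ 0 := by rintro rfl; simp [fLevel] at hf
  have hy : y ≠ 0 := by rintro rfl; simp [fLevel] at hf
  rw [mul_wirtingerX_add_mul_wirtingerY_fLevel]
  intro h
  obtain ⟨hA, hB⟩ := eq_zero_of_mul_add_mul_eq_zero halpha h
  obtain ⟨hx1, hy1⟩ := eq_one_and_eq_one_of_mul_div_eq_zero (by positivity) (by positivity) hA hB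
  have h27 : fLevel (x, y) = 1 / 27 := by
    simp only [fLevel, hx1, hy1]
    norm_num
  rw [h27] at hp
  have : (n : ℝ) = 27 := by
    field_simp at hp
    linarith
  have : n = 27 := by exact_mod_cast this
  omega

/-- For `λ/μ ∉ ℝ` and `n ≥ 28`, the vector field `X = λx ∂/∂x + μy ∂/∂y` is
nowhere tangent to the level set `{f = 1/n}`: the transversality quantity
`λx ∂f/∂x + μy ∂f/∂y` does not vanish there. -/
theorem stmt6 (lam mu : ℂ) (hlam : lam ≠ 0) (hmu : mu ≠ 0)
    (halpha : lam / mu ∉ Set.range ((↑) : ℝ → ℂ))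
    (n : ℕ) (hn : 28 ≤ n) (p : ℂ × ℂ) (hp : fLevel p = 1 / (n : ℝ)) :
    lam * p.1 * wirtingerX fLevel p + mu * p.2 * wirtingerY fLevel p ≠ 0 :=
  stmt6_general lam mu halpha n hn p hp
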